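/- arXiv:1110.3061 — 3 statements merged into one kernel-verified Lean document; each statement's English description precedes it below -/
import Mathlib

section
/- Let m = (m_x, m_z) ∈ S² with m_x ∈ ℝ² and m_z ∈ ℝ, and set ρ = (R² - |a|²)/(2(R - ⟨m, a⟩)) with a = (a₁, a₂, c) ∈ ℝ³. The ray starting at a in direction a - ρ·m intersects the paraboloid {(p, q) : -4αq = |p|² - 4α² in shifted coordinates (p,q) = (x,y,z) - a} at parameter value λ* = 2α / (R + c - ρ(1 + m_z)), i.e., the point a + λ*·(a - ρ·m) lies on the paraboloid, provided R + c - ρ(1 + m_z) > 0. -/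
/-!
Write `v = a - ρ m`. The choice of `ρ` is exactly the spheroid property `|v| = R - ρ`, and a ray
from the focus of the paraboloid `-4αq = |p|² - 4α²` in a direction `v` with `|v| = r` meets it at
parameter `2α / (r + v_z)`, because `|v_p|² = r² - v_z² = (r - v_z)(r + v_z)`.
-/

/-- The paraboloid of the statement, in coordinates centred at its focus. -/
def OnParaboloid (α p₁ p₂ q : ℝ) : Prop :=
  -(4 * α * q) = p₁ ^ 2 + p₂ ^ 2 - 4 * α ^ 2

theorem onParaboloid_mul_of_sq_eq {α r v₁ v₂ v₃ lam : ℝ}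
    (hv : v₁ ^ 2 + v₂ ^ 2 + v₃ ^ 2 = r ^ 2) (hlam : lam * (r + v₃) = 2 * α) :
    OnParaboloid α (lam * v₁) (lam * v₂) (lam * v₃) := by
  have hp : v₁ ^ 2 + v₂ ^ 2 = (r - v₃) * (r + v₃) := by linear_combination hv
  unfold OnParaboloid
  linear_combination (-(lam * (r - v₃)) - 2 * α) * hlam - lam ^ 2 * hp

theorem dot_lt_of_sqrt_lt {x₁ x₂ x₃ y₁ y₂ y₃ R : ℝ}
    (hx : x₁ ^ 2 + x₂ ^ 2 + x₃ ^ 2 = 1) (hy : Real.sqrt (y₁ ^ 2 + y₂ ^ 2 + y₃ ^ 2) < R) :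
    x₁ * y₁ + x₂ * y₂ + x₃ * y₃ < R := by
  have cauchy_schwarz : (x₁ * y₁ + x₂ * y₂ + x₃ * y₃) ^ 2 ≤ y₁ ^ 2 + y₂ ^ 2 + y₃ ^ 2 := by
    nlinarith [sq_nonneg (x₁ * y₂ - x₂ * y₁), sq_nonneg (x₁ * y₃ - x₃ * y₁),
      sq_nonneg (x₂ * y₃ - x₃ * y₂)]
  calc x₁ * y₁ + x₂ * y₂ + x₃ * y₃ ≤ |x₁ * y₁ + x₂ * y₂ + x₃ * y₃| := le_abs_self _
    _ ≤ Real.sqrt (y₁ ^ 2 + y₂ ^ 2 + y₃ ^ 2) := Real.abs_le_sqrt cauchy_schwarz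
    _ < R := hy

theorem sub_mul_sq_eq_of_spheroid {a₁ a₂ a₃ m₁ m₂ m₃ R ρ : ℝ}
    (hm : m₁ ^ 2 + m₂ ^ 2 + m₃ ^ 2 = 1)
    (hρ : 2 * ρ * (R - (m₁ * a₁ + m₂ * a₂ + m₃ * a₃)) = R ^ 2 - (a₁ ^ 2 + a₂ ^ 2 + a₃ ^ 2)) :
    (a₁ - ρ * m₁) ^ 2 + (a₂ - ρ * m₂) ^ 2 + (a₃ - ρ * m₃) ^ 2 = (R - ρ) ^ 2 := by
  linear_combination ρ ^ 2 * hm + hρ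

theorem ray_hits_paraboloid_general
    (a₁ a₂ c α R mx₁ mx₂ mz ρ lam : ℝ)
    (hR : Real.sqrt (a₁ ^ 2 + a₂ ^ 2 + c ^ 2) < R)
    (hm : mx₁ ^ 2 + mx₂ ^ 2 + mz ^ 2 = 1)
    (hρ : ρ = (R ^ 2 - (a₁ ^ 2 + a₂ ^ 2 + c ^ 2)) /
      (2 * (R - (mx₁ * a₁ + mx₂ * a₂ + mz * c))))
    (hden : 0 < R + c - ρ * (1 + mz))
    (hlam : lam = 2 * α / (R + c - ρ * (1 + mz))) :
    -(4 * α * (lam * (c - ρ * mz))) =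
      (lam * (a₁ - ρ * mx₁)) ^ 2 + (lam * (a₂ - ρ * mx₂)) ^ 2 - 4 * α ^ 2 := by
  have hinner : mx₁ * a₁ + mx₂ * a₂ + mz * c < R := dot_lt_of_sqrt_lt hm hR
  have hρ' : 2 * ρ * (R - (mx₁ * a₁ + mx₂ * a₂ + mz * c)) =
      R ^ 2 - (a₁ ^ 2 + a₂ ^ 2 + c ^ 2) := by
    linear_combination (eq_div_iff (by linarith)).mp hρ
  have hlam' : lam * ((R - ρ) + (c - ρ * mz)) = 2 * α := by
    rw [hlam, div_mul_eq_mul_div, div_eq_iff hden.ne']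
    ring
  exact onParaboloid_mul_of_sq_eq (sub_mul_sq_eq_of_spheroid hm hρ') hlam'

/-- The ray starting at the focus `a = (a₁, a₂, c)` in the direction `a - ρ·m`
(the direction of the ray reflected off the spheroid at `ρ(m)·m`) meets the paraboloid
`-4αq = |p|² - 4α²` (in coordinates shifted by `a`) at the parameter value
`λ* = 2α/(R + c - ρ(1 + m_z))`; i.e. the point `a + λ*·(a - ρ·m)` lies on the paraboloid. -/
theorem ray_hits_paraboloid
    (a₁ a₂ c α R mx₁ mx₂ mz ρ lam : ℝ)
    (hα : 0 < α)
    (hR : Real.sqrt (a₁ ^ 2 + a₂ ^ 2 + c ^ 2) < R)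
    (hm : mx₁ ^ 2 + mx₂ ^ 2 + mz ^ 2 = 1)
    (hρ : ρ = (R ^ 2 - (a₁ ^ 2 + a₂ ^ 2 + c ^ 2)) /
      (2 * (R - (mx₁ * a₁ + mx₂ * a₂ + mz * c))))
    (hden : 0 < R + c - ρ * (1 + mz))
    (hlam : lam = 2 * α / (R + c - ρ * (1 + mz))) :
    -(4 * α * (lam * (c - ρ * mz))) =
      (lam * (a₁ - ρ * mx₁)) ^ 2 + (lam * (a₂ - ρ * mx₂)) ^ 2 - 4 * α ^ 2 :=
  ray_hits_paraboloid_general a₁ a₂ c α R mx₁ mx₂ mz ρ lam hR hm hρ hden hlam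
end

section
/- With parameters a = b = 0, c = -0.4, α = 1, R = 1.3, the ray tracing map γ maps the spherical cap D = {(m_x, m_z) ∈ S² : |m_x| ≤ 0.8, m_z < 0} onto the disk T = {x ∈ ℝ² : |x| ≤ 17/9}; in particular the boundary circle |m_x| = 0.8, m_z = -0.6 is mapped to the circle of radius 17/9 = 1.888... in ℝ². -/
/-!
Clearing denominators, the coefficient of `m_x` in `γ(m)` is `-(34/9)/(1 - m_z)`, so `γ` is
`-34/9` times the stereographic projection `m ↦ m_x/(1 - m_z)` from the north pole. That
projection is a bijection from `S² \ {north pole}` onto `ℝ²` with `|m_x/(1 - m_z)|² =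
(1 + m_z)/(1 - m_z)`, which is increasing in `m_z`; the cap `D` is `m_z ≤ -3/5`, where this
quantity is at most `1/4`. Hence `γ(D)` is the disk of radius `(34/9)·(1/2) = 17/9`.
-/

section Stereographic

variable {x₁ x₂ z : ℝ}

theorem sq_add_sq_div_one_sub_sq (h : x₁ ^ 2 + x₂ ^ 2 + z ^ 2 = 1) (hz : z ≠ 1) :
    (x₁ / (1 - z)) ^ 2 + (x₂ / (1 - z)) ^ 2 = (1 + z) / (1 - z) := by
  have hz' : 1 - z ≠ 0 := sub_ne_zero.mpr hz.symm
  field_simp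
  linear_combination h

theorem one_add_div_one_sub_le_quarter_iff (hz : z < 1) :
    (1 + z) / (1 - z) ≤ 1 / 4 ↔ z ≤ -3 / 5 := by
  rw [div_le_iff₀ (sub_pos.mpr hz)]
  constructor <;> intro h <;> linarith

theorem exists_sphere_div_one_sub_eq (p₁ p₂ : ℝ) :
    ∃ x₁ x₂ z : ℝ, x₁ ^ 2 + x₂ ^ 2 + z ^ 2 = 1 ∧ z < 1 ∧
      x₁ / (1 - z) = p₁ ∧ x₂ / (1 - z) = p₂ := by
  set s := p₁ ^ 2 + p₂ ^ 2
  have hs : 0 < s + 1 := by positivity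
  have h1z : 1 - (s - 1) / (s + 1) = 2 / (s + 1) := by field_simp; ring
  refine ⟨2 * p₁ / (s + 1), 2 * p₂ / (s + 1), (s - 1) / (s + 1), ?_, ?_, ?_, ?_⟩
  · field_simp
    ring
  · rw [div_lt_one hs]
    linarith
  all_goals rw [h1z]; field_simp

theorem sq_add_sq_le_and_neg_iff (h : x₁ ^ 2 + x₂ ^ 2 + z ^ 2 = 1) :
    x₁ ^ 2 + x₂ ^ 2 ≤ (0.8 : ℝ) ^ 2 ∧ z < 0 ↔ z ≤ -3 / 5 := by
  constructor
  · rintro ⟨hcap, hneg⟩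
    nlinarith
  · intro hz
    exact ⟨by nlinarith, by linarith⟩

end Stereographic

theorem ray_coeff_mul_eq {z : ℝ} (hz : (1.3 : ℝ) + 0.4 * z ≠ 0) (x : ℝ) :
    -(2 * (0.765 / (1.3 + 0.4 * z)) / (0.9 - (0.765 / (1.3 + 0.4 * z)) * (1 + z))) * x =
      -(34 / 9) * (x / (1 - z)) := by
  have hden : (0.9 : ℝ) - 0.765 / (1.3 + 0.4 * z) * (1 + z) =
      0.405 * (1 - z) / (1.3 + 0.4 * z) := by
    field_simp
    ring
  rw [hden]
  rcases eq_or_ne z 1 with rfl | hz1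
  · simp -- both sides are `0` by the convention `a / 0 = 0`
  · have hz1' : 1 - z ≠ 0 := sub_ne_zero.mpr hz1.symm
    field_simp
    ring

/-- With `a = b = 0`, `c = -0.4`, `α = 1`, `R = 1.3`, the ray tracing map
`γ(m) = -(2ρ(m)/(0.9 - ρ(m)(1+m_z)))·m_x` with `ρ(m) = 0.765/(1.3 + 0.4 m_z)` maps the
spherical cap `D = {(m_x, m_z) ∈ S² : |m_x| ≤ 0.8, m_z < 0}` onto the closed disk of radius
`17/9`; in particular the boundary circle `|m_x| = 0.8`, `m_z = -0.6` is mapped to the circle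
of radius `17/9`. -/
theorem ray_tracing_map_cap_onto_disk :
    ({y : ℝ × ℝ | ∃ mx₁ mx₂ mz : ℝ,
        mx₁ ^ 2 + mx₂ ^ 2 + mz ^ 2 = 1 ∧ mx₁ ^ 2 + mx₂ ^ 2 ≤ (0.8 : ℝ) ^ 2 ∧ mz < 0 ∧
        y = (-(2 * (0.765 / (1.3 + 0.4 * mz)) /
              (0.9 - (0.765 / (1.3 + 0.4 * mz)) * (1 + mz))) * mx₁,
             -(2 * (0.765 / (1.3 + 0.4 * mz)) /
              (0.9 - (0.765 / (1.3 + 0.4 * mz)) * (1 + mz))) * mx₂)} =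
      {y : ℝ × ℝ | y.1 ^ 2 + y.2 ^ 2 ≤ (17 / 9 : ℝ) ^ 2}) ∧
    (∀ mx₁ mx₂ : ℝ, mx₁ ^ 2 + mx₂ ^ 2 = (0.8 : ℝ) ^ 2 →
      (-(2 * (0.765 / (1.3 + 0.4 * (-0.6 : ℝ))) /
          (0.9 - (0.765 / (1.3 + 0.4 * (-0.6 : ℝ))) * (1 + (-0.6 : ℝ)))) * mx₁) ^ 2 +
      (-(2 * (0.765 / (1.3 + 0.4 * (-0.6 : ℝ))) /
          (0.9 - (0.765 / (1.3 + 0.4 * (-0.6 : ℝ))) * (1 + (-0.6 : ℝ)))) * mx₂) ^ 2 =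
        (17 / 9 : ℝ) ^ 2) := by
  refine ⟨Set.ext fun y => ⟨?_, fun hy => ?_⟩, fun mx₁ mx₂ h => ?_⟩
  · rintro ⟨mx₁, mx₂, mz, hsphere, hcap, hneg, rfl⟩
    have hz := (sq_add_sq_le_and_neg_iff hsphere).mp ⟨hcap, hneg⟩
    have hd : (1.3 : ℝ) + 0.4 * mz ≠ 0 := by nlinarith
    have hsq := sq_add_sq_div_one_sub_sq hsphere (by linarith)
    have hquarter := (one_add_div_one_sub_le_quarter_iff (by linarith)).mpr hz
    rw [Set.mem_ofPred_eq, ray_coeff_mul_eq hd, ray_coeff_mul_eq hd]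
    nlinarith
  · obtain ⟨mx₁, mx₂, mz, hsphere, hz1, h₁, h₂⟩ :=
      exists_sphere_div_one_sub_eq (-(9 / 34) * y.1) (-(9 / 34) * y.2)
    have hsq := sq_add_sq_div_one_sub_sq hsphere hz1.ne
    rw [h₁, h₂] at hsq
    have hquarter : (1 + mz) / (1 - mz) ≤ 1 / 4 := by
      rw [Set.mem_ofPred_eq] at hy
      nlinarith
    have hz := (one_add_div_one_sub_le_quarter_iff hz1).mp hquarter
    have hd : (1.3 : ℝ) + 0.4 * mz ≠ 0 := by nlinarith
    obtain ⟨hcap, hneg⟩ := (sq_add_sq_le_and_neg_iff hsphere).mpr hz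
    refine ⟨mx₁, mx₂, mz, hsphere, hcap, hneg, ?_⟩
    rw [ray_coeff_mul_eq hd, ray_coeff_mul_eq hd, h₁, h₂]
    ring_nf
  · have hsq := sq_add_sq_div_one_sub_sq (x₁ := mx₁) (x₂ := mx₂) (z := -0.6)
      (by linear_combination h) (by norm_num)
    rw [ray_coeff_mul_eq (by norm_num), ray_coeff_mul_eq (by norm_num)]
    norm_num at hsq ⊢
    linear_combination (34 / 9) ^ 2 * hsq
end

section
/- For the explicit data set with a=b=0, c=-0.4, α=1, R=1.3, the radial function of the first reflector is ρ(m) = 0.765/(1.3 + 0.4 m_z), and every point ρ(m)·m on this reflector together with the corresponding point on the second reflector z(x) = -0.25(x₁² + x₂²) + 0.6 yields total optical path length L = ℓ + d with reduced optical path length ℓ = R + 2α = 2.9: concretely, for any m ∈ D with image x = γ(m), the sum ρ(m) + |ρ(m)m - (x, z(x))| + (z(x) - (-d)) equals 2.9 + d for any d. -/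
set_option maxHeartbeats 1000000 in
/-- For the explicit data set (`c = -0.4`, `α = 1`, `R = 1.3`), with first
reflector `ρ(m) = 0.765/(1.3 + 0.4 m_z)`, second reflector `z(x) = -0.25|x|² + 0.6`, and ray
tracing map `γ(m) = -(2ρ(m)/(0.9 - ρ(m)(1+m_z)))·m_x` , every ray from the origin through
`m ∈ D` has total optical path length `ρ(m) + |ρ(m)m - (x, z(x))| + (z(x) + d) = 2.9 + d`
(with `x = γ(m)`), for any `d`. -/
theorem optical_path_length_constant
    (mx₁ mx₂ mz d : ℝ)
    (hm : mx₁ ^ 2 + mx₂ ^ 2 + mz ^ 2 = 1)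
    (hcap : mx₁ ^ 2 + mx₂ ^ 2 ≤ (0.8 : ℝ) ^ 2) (hmz : mz < 0) :
    let ρ : ℝ := 0.765 / (1.3 + 0.4 * mz)
    let k : ℝ := -(2 * ρ / (0.9 - ρ * (1 + mz)))
    let x₁ : ℝ := k * mx₁
    let x₂ : ℝ := k * mx₂
    let z : ℝ := -0.25 * (x₁ ^ 2 + x₂ ^ 2) + 0.6
    ρ + Real.sqrt ((ρ * mx₁ - x₁) ^ 2 + (ρ * mx₂ - x₂) ^ 2 + (ρ * mz - z) ^ 2) +
        (z + d) = 2.9 + d := by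
  intro ρ k x₁ x₂ z
  have hρ : ρ = 0.765 / (1.3 + 0.4 * mz) := rfl
  have hk : k = -(2 * ρ / (0.9 - ρ * (1 + mz))) := rfl
  have hx1 : x₁ = k * mx₁ := rfl
  have hx2 : x₂ = k * mx₂ := rfl
  have hz : z = -0.25 * (x₁ ^ 2 + x₂ ^ 2) + 0.6 := rfl
  clear_value ρ k x₁ x₂ z
  have hs : mx₁ ^ 2 + mx₂ ^ 2 = 1 - mz ^ 2 := by linarith
  have hA : (0:ℝ) < 1.3 + 0.4 * mz := by
    nlinarith [sq_nonneg (mz + 1), sq_nonneg mx₁, sq_nonneg mx₂]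
  have hA' : (1.3 + 0.4 * mz : ℝ) ≠ 0 := ne_of_gt hA
  have hρA : ρ * (1.3 + 0.4 * mz) = 0.765 := by
    rw [hρ]; field_simp
  have hρpos : 0 < ρ := by
    rw [hρ]; positivity
  have hDval : 0.9 - ρ * (1 + mz) = 0.405 * (1 - mz) / (1.3 + 0.4 * mz) := by
    rw [hρ]; field_simp; ring
  have hD : (0:ℝ) < 0.9 - ρ * (1 + mz) := by
    rw [hDval]
    apply div_pos _ hA
    nlinarith
  have hD' : (0.9 - 0.765 / (1.3 + 0.4 * mz) * (1 + mz) : ℝ) ≠ 0 := by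
    rw [← hρ]; exact ne_of_gt hD
  have hz2 : z = -0.25 * (k ^ 2 * (1 - mz ^ 2)) + 0.6 := by
    rw [hz, hx1, hx2]; linear_combination (-0.25 * k ^ 2) * hs
  have hE : (ρ * mx₁ - x₁) ^ 2 + (ρ * mx₂ - x₂) ^ 2 + (ρ * mz - z) ^ 2
      = (ρ - k) ^ 2 * (1 - mz ^ 2) + (ρ * mz - z) ^ 2 := by
    rw [hx1, hx2]; linear_combination (ρ - k) ^ 2 * hs
  have hmz1 : (1 - mz : ℝ) ≠ 0 := ne_of_gt (by linarith)
  have hkval : k = -34 / (9 * (1 - mz)) := by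
    rw [hk, hDval, hρ]
    field_simp
    ring
  have key : (ρ - k) ^ 2 * (1 - mz ^ 2) + (ρ * mz - z) ^ 2 = (2.9 - ρ - z) ^ 2 := by
    rw [hz2, hkval, hρ]
    field_simp
    ring
  have hmzge : -1 ≤ mz := by
    nlinarith [sq_nonneg (mz + 1), sq_nonneg mx₁, sq_nonneg mx₂]
  have hρle : ρ ≤ 0.85 := by
    rw [hρ, div_le_iff₀ hA]; linarith
  have hTnn : 0 ≤ 2.9 - ρ - z := by
    have hzle : z ≤ 0.6 := by
      rw [hz]; linarith [sq_nonneg x₁, sq_nonneg x₂]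
    linarith
  rw [hE.trans key, Real.sqrt_sq hTnn]
  ring
end
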